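/- arXiv:1803.01930 — 2 statements merged into one kernel-verified Lean document; each statement's English description precedes it below -/
import Mathlib

section
/- For every sequence σ there exist unique real numbers D(σ), E(σ), L(σ), TW(σ) with D(σ) ≥ 0, TW(σ) ≥ 0 and E(σ) ≤ L(σ) such that for every start time t ∈ ℝ: W(σ, t) = TW(σ) + max(t − L(σ), 0) and A(σ, t) = D(σ) + max(E(σ) − t, 0). (Thus a sequence is fully characterized, for move evaluation purposes, by its minimum duration D, minimum time warp TW, and the interval [E, L] of start times achieving both.) -/
/-!
Both profiles are computed backwards along the sequence. A single visit `v` has no time warp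
before `b v` and idles before `a v`, which gives `(D, E, L, TW) = (s v, a v, b v, 0)`. Prepending
`v` to a sequence with characteristics `(D, E, L, TW)`, and writing `c` for the service time of
`v` plus the travel time to the next visit, the old thresholds `E` and `L` are pulled back
through the clamped service start `svcStart v (· - c)`; both recursions then rest on one
piecewise-linear identity for the clamp `max a (min t b)`. Uniqueness holds because a function
`t ↦ C + max (t - L) 0` determines both `C` and `L`.
-/

variable {V : Type*}

/-- Service start time at a visit: `h = max(a v, min(τ, b v))`. -/
noncomputable def svcStart (a b : V → ℝ) (v : V) (t : ℝ) : ℝ :=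
  max (a v) (min t (b v))

/-- Completion time `C(σ, t)` of the forward schedule of `σ` started at `t`. -/
noncomputable def comp (a b s : V → ℝ) (d : V → V → ℝ) : List V → ℝ → ℝ
  | [], t => t
  | [v], t => svcStart a b v t + s v
  | v :: w :: rest, t => comp a b s d (w :: rest) (svcStart a b v t + s v + d v w)

/-- Total time warp `W(σ, t)` of the forward schedule of `σ` started at `t`. -/
noncomputable def warp (a b s : V → ℝ) (d : V → V → ℝ) : List V → ℝ → ℝ
  | [], _ => 0
  | [v], t => max (t - b v) 0
  | v :: w :: rest, t =>
      max (t - b v) 0 + warp a b s d (w :: rest) (svcStart a b v t + s v + d v w)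

/-- Active duration `A(σ, t) = C(σ, t) − t + W(σ, t)`. -/
noncomputable def activeDur (a b s : V → ℝ) (d : V → V → ℝ) (σ : List V) (t : ℝ) : ℝ :=
  comp a b s d σ t - t + warp a b s d σ t

section Arithmetic

variable {a b : V → ℝ} {v : V}

theorem svcStart_mono : Monotone (svcStart a b v) :=
  fun _ _ h => max_le_max le_rfl (min_le_min_right _ h)

theorem svcStart_sub_add_max_sub (hab : a v ≤ b v) (t : ℝ) :
    svcStart a b v t - t + max (t - b v) 0 = max (a v - t) 0 := by
  simp only [svcStart, max_def, min_def]
  split_ifs <;> linarith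

/-- Used with `(t, y) = (t, L - c)` for the time warp and with `(t, y) = (E - c, t)` for the
duration. -/
theorem max_sub_add_max_svcStart_sub (hab : a v ≤ b v) (t y : ℝ) :
    max (t - b v) 0 + max (svcStart a b v t - y) 0
      = max (a v - y) 0 + max (t - svcStart a b v y) 0 := by
  simp only [svcStart, max_def, min_def]
  split_ifs <;> linarith

theorem eq_of_forall_add_max_sub_eq {c₁ c₂ L₁ L₂ : ℝ}
    (h : ∀ t, c₁ + max (t - L₁) 0 = c₂ + max (t - L₂) 0) : c₁ = c₂ ∧ L₁ = L₂ := by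
  have h₁ := h L₁
  have h₂ := h L₂
  rw [sub_self, max_self] at h₁ h₂
  have := le_max_left (L₁ - L₂) 0
  have := le_max_right (L₁ - L₂) 0
  have := le_max_left (L₂ - L₁) 0
  have := le_max_right (L₂ - L₁) 0
  constructor <;> linarith

theorem eq_of_forall_add_max_sub_eq' {c₁ c₂ E₁ E₂ : ℝ}
    (h : ∀ t, c₁ + max (E₁ - t) 0 = c₂ + max (E₂ - t) 0) : c₁ = c₂ ∧ E₁ = E₂ := by
  obtain ⟨hc, hE⟩ := eq_of_forall_add_max_sub_eq (L₁ := -E₁) (L₂ := -E₂) fun t => by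
    simpa only [sub_neg_eq_add, add_comm t] using h (-t)
  exact ⟨hc, neg_inj.mp hE⟩

end Arithmetic

section Schedule

variable {a b s : V → ℝ} {d : V → V → ℝ}

theorem activeDur_singleton {v : V} (hab : a v ≤ b v) (t : ℝ) :
    activeDur a b s d [v] t = s v + max (a v - t) 0 := by
  rw [← svcStart_sub_add_max_sub hab t]
  simp only [activeDur, comp, warp]
  ring

theorem warp_cons_cons (v w : V) (rest : List V) (t : ℝ) :
    warp a b s d (v :: w :: rest) t
      = max (t - b v) 0 + warp a b s d (w :: rest) (svcStart a b v t + s v + d v w) :=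
  rfl

theorem activeDur_cons_cons {v : V} (hab : a v ≤ b v) (w : V) (rest : List V) (t : ℝ) :
    activeDur a b s d (v :: w :: rest) t
      = activeDur a b s d (w :: rest) (svcStart a b v t + s v + d v w)
        + (s v + d v w) + max (a v - t) 0 := by
  rw [← svcStart_sub_add_max_sub hab t]
  simp only [activeDur, comp, warp]
  ring

variable (a b s d) in
def HasCharacteristics (σ : List V) (D E L TW : ℝ) : Prop :=
  0 ≤ D ∧ 0 ≤ TW ∧ E ≤ L ∧
    ∀ t, warp a b s d σ t = TW + max (t - L) 0 ∧ activeDur a b s d σ t = D + max (E - t) 0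

theorem hasCharacteristics_singleton {v : V} (hs : 0 ≤ s v) (hab : a v ≤ b v) :
    HasCharacteristics a b s d [v] (s v) (a v) (b v) 0 :=
  ⟨hs, le_rfl, hab, fun t => ⟨by simp [warp], activeDur_singleton hab t⟩⟩

theorem HasCharacteristics.cons_cons {v w : V} {rest : List V} {D E L TW : ℝ}
    (hs : 0 ≤ s v) (hab : a v ≤ b v) (hd : 0 ≤ d v w)
    (h : HasCharacteristics a b s d (w :: rest) D E L TW) :
    HasCharacteristics a b s d (v :: w :: rest)
      (D + (s v + d v w) + max (E - (s v + d v w) - b v) 0)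
      (svcStart a b v (E - (s v + d v w))) (svcStart a b v (L - (s v + d v w)))
      (TW + max (a v - (L - (s v + d v w))) 0) := by
  obtain ⟨hD, hTW, hEL, hprofile⟩ := h
  refine ⟨by positivity [hs, hd], by positivity,
    svcStart_mono (sub_le_sub_right hEL _), fun t => ⟨?_, ?_⟩⟩
  · have := max_sub_add_max_svcStart_sub hab t (L - (s v + d v w))
    rw [warp_cons_cons, (hprofile _).1,
      show svcStart a b v t + s v + d v w - L = svcStart a b v t - (L - (s v + d v w)) by ring]
    linarith
  · have := max_sub_add_max_svcStart_sub hab (E - (s v + d v w)) t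
    rw [activeDur_cons_cons hab, (hprofile _).2,
      show E - (svcStart a b v t + s v + d v w) = E - (s v + d v w) - svcStart a b v t by ring]
    linarith

theorem exists_hasCharacteristics (hs : ∀ v, 0 ≤ s v) (hab : ∀ v, a v ≤ b v)
    (hd : ∀ u v, 0 ≤ d u v) :
    ∀ σ : List V, σ ≠ [] → ∃ D E L TW, HasCharacteristics a b s d σ D E L TW
  | [], h => (h rfl).elim
  | [v], _ => ⟨_, _, _, _, hasCharacteristics_singleton (hs v) (hab v)⟩
  | v :: w :: rest, _ =>
    have ⟨_, _, _, _, h⟩ := exists_hasCharacteristics hs hab hd (w :: rest) (List.cons_ne_nil _ _)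
    ⟨_, _, _, _, h.cons_cons (hs v) (hab v) (hd v w)⟩

theorem HasCharacteristics.unique {σ : List V} {D E L TW D' E' L' TW' : ℝ}
    (h : HasCharacteristics a b s d σ D E L TW)
    (h' : HasCharacteristics a b s d σ D' E' L' TW') :
    D = D' ∧ E = E' ∧ L = L' ∧ TW = TW' := by
  obtain ⟨hTW, hL⟩ := eq_of_forall_add_max_sub_eq fun t => (h.2.2.2 t).1.symm.trans (h'.2.2.2 t).1
  obtain ⟨hD, hE⟩ := eq_of_forall_add_max_sub_eq' fun t => (h.2.2.2 t).2.symm.trans (h'.2.2.2 t).2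
  exact ⟨hD, hE, hL, hTW⟩

end Schedule

theorem exists_unique_characteristics_general
    (a b s : V → ℝ) (d : V → V → ℝ)
    (hs : ∀ v, 0 ≤ s v) (hab : ∀ v, a v ≤ b v) (hd : ∀ u v, 0 ≤ d u v)
    (σ : List V) (hσ : σ ≠ []) :
    ∃! p : ℝ × ℝ × ℝ × ℝ,
      0 ≤ p.1 ∧ 0 ≤ p.2.2.2 ∧ p.2.1 ≤ p.2.2.1 ∧
      ∀ t : ℝ,
        warp a b s d σ t = p.2.2.2 + max (t - p.2.2.1) 0 ∧
        activeDur a b s d σ t = p.1 + max (p.2.1 - t) 0 := by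
  obtain ⟨D, E, L, TW, h⟩ := exists_hasCharacteristics hs hab hd σ hσ
  refine ⟨(D, E, L, TW), h, fun ⟨D', E', L', TW'⟩ h' => ?_⟩
  obtain ⟨rfl, rfl, rfl, rfl⟩ := HasCharacteristics.unique h' h
  rfl

/-- Every nonempty sequence `σ` is characterized by a unique quadruple
`(D, E, L, TW)` with `D ≥ 0`, `TW ≥ 0`, `E ≤ L`, such that for every start time `t`:
`W(σ, t) = TW + max(t − L, 0)` and `A(σ, t) = D + max(E − t, 0)`. -/
theorem exists_unique_characteristics [Fintype V]
    (a b s : V → ℝ) (d : V → V → ℝ)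
    (hs : ∀ v, 0 ≤ s v) (hab : ∀ v, a v ≤ b v) (hd : ∀ u v, 0 ≤ d u v)
    (σ : List V) (hσ : σ ≠ []) :
    ∃! p : ℝ × ℝ × ℝ × ℝ,
      0 ≤ p.1 ∧ 0 ≤ p.2.2.2 ∧ p.2.1 ≤ p.2.2.1 ∧
      ∀ t : ℝ,
        warp a b s d σ t = p.2.2.2 + max (t - p.2.2.1) 0 ∧
        activeDur a b s d σ t = p.1 + max (p.2.1 - t) 0 :=
  exists_unique_characteristics_general a b s d hs hab hd σ hσ
end

section
/- For any two sequences σ1 (with last visit u) and σ2 (with first visit v), the earliest optimal start time of the concatenation satisfies E(σ1 ⊕ σ2) = max(E(σ2) − δ, E(σ1)) − Δ_WT, where δ = D(σ1) − TW(σ1) + d_{u v} and Δ_WT = max(E(σ2) − δ − L(σ1), 0). -/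
variable {V : Type*}

/-- Minimum time warp `TW(σ) = min_t W(σ, t)`. -/
noncomputable def TWv (a b s : V → ℝ) (d : V → V → ℝ) (σ : List V) : ℝ :=
  sInf (Set.range fun t => warp a b s d σ t)

/-- Latest start time achieving the minimum time warp: `L(σ) = max {t : W(σ,t) = TW(σ)}`. -/
noncomputable def Lv (a b s : V → ℝ) (d : V → V → ℝ) (σ : List V) : ℝ :=
  sSup {t | warp a b s d σ t = TWv a b s d σ}

/-- Minimum active duration `D(σ) = min_t A(σ, t)`. -/
noncomputable def Dv (a b s : V → ℝ) (d : V → V → ℝ) (σ : List V) : ℝ :=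
  sInf (Set.range fun t => activeDur a b s d σ t)

/-- Earliest start time achieving the minimum duration: `E(σ) = min {t : A(σ,t) = D(σ)}`. -/
noncomputable def Ev (a b s : V → ℝ) (d : V → V → ℝ) (σ : List V) : ℝ :=
  sInf {t | activeDur a b s d σ t = Dv a b s d σ}

/-! For a nonempty sequence `σ`, the time warp and the completion time are piecewise linear
in the start time `t`, of the shape `W(σ, t) = TW + (t - L)⁺` and
`C(σ, t) = min (max t E) L + (D - TW)` with `E ≤ L`. Then `A(σ, t) = D + (E - t)⁺`, which
identifies the four parameters as `TW(σ)`, `L(σ)`, `D(σ)` and `E(σ)`. A single visit `x` has this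
shape with parameters `(0, b x, s x, a x)`, and the shape survives concatenation: the schedule of
`σ₁ ⊕ σ₂` runs `σ₂` from `C(σ₁, t) + d u v`, and composing the two profiles gives the parameters
of `σ₁ ⊕ σ₂` explicitly; the formula for `E(σ₁ ⊕ σ₂)` is one of them. -/

section Profile

variable {a b s : V → ℝ} {d : V → V → ℝ}

theorem comp_append {σ₁ σ₂ : List V} {u v : V} (hu : σ₁.getLast? = some u)
    (hv : σ₂.head? = some v) (t : ℝ) :
    comp a b s d (σ₁ ++ σ₂) t = comp a b s d σ₂ (comp a b s d σ₁ t + d u v) := by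
  obtain ⟨l, rfl⟩ := List.head?_eq_some_iff.mp hv
  induction σ₁ generalizing t with
  | nil => simp at hu
  | cons x r ih =>
    cases r with
    | nil =>
      obtain rfl : x = u := by simpa using hu
      rfl
    | cons y r => exact ih (by rwa [List.getLast?_cons_cons] at hu) _

theorem warp_append {σ₁ σ₂ : List V} {u v : V} (hu : σ₁.getLast? = some u)
    (hv : σ₂.head? = some v) (t : ℝ) :
    warp a b s d (σ₁ ++ σ₂) t =
      warp a b s d σ₁ t + warp a b s d σ₂ (comp a b s d σ₁ t + d u v) := by
  obtain ⟨l, rfl⟩ := List.head?_eq_some_iff.mp hv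
  induction σ₁ generalizing t with
  | nil => simp at hu
  | cons x r ih =>
    cases r with
    | nil =>
      obtain rfl : x = u := by simpa using hu
      rfl
    | cons y r =>
      rw [List.cons_append, List.cons_append, warp, warp, comp, ← List.cons_append,
        ih (by rwa [List.getLast?_cons_cons] at hu), ← add_assoc]

variable (a b s d) in
structure IsScheduleProfile (σ : List V) (TW L D E : ℝ) : Prop where
  le : E ≤ L
  warp_eq : ∀ t, warp a b s d σ t = TW + max (t - L) 0
  comp_eq : ∀ t, comp a b s d σ t = min (max t E) L + (D - TW)

theorem isScheduleProfile_singleton {x : V} (hx : a x ≤ b x) :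
    IsScheduleProfile a b s d [x] 0 (b x) (s x) (a x) where
  le := hx
  warp_eq t := by simp [warp]
  comp_eq t := by
    rw [comp, svcStart, max_min_distrib_left, max_eq_right hx, max_comm, sub_zero]

theorem IsScheduleProfile.append {σ₁ σ₂ : List V} {u v : V} {TW₁ L₁ D₁ E₁ TW₂ L₂ D₂ E₂ : ℝ}
    (h₁ : IsScheduleProfile a b s d σ₁ TW₁ L₁ D₁ E₁)
    (h₂ : IsScheduleProfile a b s d σ₂ TW₂ L₂ D₂ E₂)
    (hu : σ₁.getLast? = some u) (hv : σ₂.head? = some v) :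
    IsScheduleProfile a b s d (σ₁ ++ σ₂)
      (TW₁ + TW₂ + max (E₁ + (D₁ - TW₁ + d u v) - L₂) 0)
      (max (min (L₂ - (D₁ - TW₁ + d u v)) L₁) E₁)
      (D₁ + D₂ + d u v + max (E₂ - (D₁ - TW₁ + d u v) - L₁) 0)
      (max (E₂ - (D₁ - TW₁ + d u v)) E₁ - max (E₂ - (D₁ - TW₁ + d u v) - L₁) 0) where
  le := by grind [h₁.le, h₂.le]
  warp_eq t := by
    rw [warp_append hu hv, h₁.warp_eq, h₁.comp_eq, h₂.warp_eq]
    grind [h₁.le]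
  comp_eq t := by
    rw [comp_append hu hv, h₁.comp_eq, h₂.comp_eq]
    grind [h₁.le, h₂.le]

theorem exists_isScheduleProfile (hab : ∀ v, a v ≤ b v) {σ : List V} (hσ : σ ≠ []) :
    ∃ TW L D E, IsScheduleProfile a b s d σ TW L D E := by
  induction σ with
  | nil => exact absurd rfl hσ
  | cons x r ih =>
    cases r with
    | nil => exact ⟨_, _, _, _, isScheduleProfile_singleton (hab x)⟩
    | cons y r =>
      obtain ⟨TW, L, D, E, h⟩ := ih (List.cons_ne_nil y r)
      exact ⟨_, _, _, _, (isScheduleProfile_singleton (hab x)).append h rfl rfl⟩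

namespace IsScheduleProfile

variable {σ : List V} {TW L D E : ℝ}

theorem TWv_eq (h : IsScheduleProfile a b s d σ TW L D E) : TWv a b s d σ = TW := by
  refine IsLeast.csInf_eq ⟨⟨L, by simp [h.warp_eq]⟩, ?_⟩
  rintro _ ⟨t, rfl⟩
  simp [h.warp_eq]

theorem Lv_eq (h : IsScheduleProfile a b s d σ TW L D E) : Lv a b s d σ = L := by
  have hset : {t | warp a b s d σ t = TWv a b s d σ} = Set.Iic L := by
    ext t
    simp [h.warp_eq, h.TWv_eq]
  rw [Lv, hset, csSup_Iic]

theorem activeDur_eq (h : IsScheduleProfile a b s d σ TW L D E) (t : ℝ) :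
    activeDur a b s d σ t = D + max (E - t) 0 := by
  rw [activeDur, h.warp_eq, h.comp_eq]
  grind [h.le]

theorem Dv_eq (h : IsScheduleProfile a b s d σ TW L D E) : Dv a b s d σ = D := by
  refine IsLeast.csInf_eq ⟨⟨E, by simp [h.activeDur_eq]⟩, ?_⟩
  rintro _ ⟨t, rfl⟩
  simp [h.activeDur_eq]

theorem Ev_eq (h : IsScheduleProfile a b s d σ TW L D E) : Ev a b s d σ = E := by
  have hset : {t | activeDur a b s d σ t = Dv a b s d σ} = Set.Ici E := by
    ext t
    simp [h.activeDur_eq, h.Dv_eq]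
  rw [Ev, hset, csInf_Ici]

end IsScheduleProfile

end Profile

theorem concat_E_general
    (a b s : V → ℝ) (d : V → V → ℝ)
    (hab : ∀ v, a v ≤ b v)
    (σ₁ σ₂ : List V) (u v : V)
    (hu : σ₁.getLast? = some u) (hv : σ₂.head? = some v) :
    Ev a b s d (σ₁ ++ σ₂) =
      max (Ev a b s d σ₂ - (Dv a b s d σ₁ - TWv a b s d σ₁ + d u v)) (Ev a b s d σ₁) -
        max (Ev a b s d σ₂ - (Dv a b s d σ₁ - TWv a b s d σ₁ + d u v) - Lv a b s d σ₁) 0 := by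
  obtain ⟨TW₁, L₁, D₁, E₁, h₁⟩ := exists_isScheduleProfile (d := d) hab (σ := σ₁) (by grind)
  obtain ⟨TW₂, L₂, D₂, E₂, h₂⟩ := exists_isScheduleProfile (d := d) hab (σ := σ₂) (by grind)
  rw [(h₁.append h₂ hu hv).Ev_eq, h₁.Ev_eq, h₂.Ev_eq, h₁.Dv_eq, h₁.TWv_eq, h₁.Lv_eq]

/-- For sequences `σ₁` (with last visit `u`) and `σ₂` (with first visit `v`),
`E(σ₁ ⊕ σ₂) = max(E(σ₂) − δ, E(σ₁)) − Δ_WT` where `δ = D(σ₁) − TW(σ₁) + d u v` and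
`Δ_WT = max(E(σ₂) − δ − L(σ₁), 0)`. -/
theorem concat_E [Fintype V]
    (a b s : V → ℝ) (d : V → V → ℝ)
    (hs : ∀ v, 0 ≤ s v) (hab : ∀ v, a v ≤ b v) (hd : ∀ u v, 0 ≤ d u v)
    (σ₁ σ₂ : List V) (u v : V)
    (hu : σ₁.getLast? = some u) (hv : σ₂.head? = some v) :
    Ev a b s d (σ₁ ++ σ₂) =
      max (Ev a b s d σ₂ - (Dv a b s d σ₁ - TWv a b s d σ₁ + d u v)) (Ev a b s d σ₁) -
        max (Ev a b s d σ₂ - (Dv a b s d σ₁ - TWv a b s d σ₁ + d u v) - Lv a b s d σ₁) 0 :=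
  concat_E_general a b s d hab σ₁ σ₂ u v hu hv
end
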